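/- For all d, n₀, g ∈ ℤ⁺ with n₀ ≥ 2, every MPP pebbling strategy of the zipper gadget Z(d,n₀,g) with a single processor (k=1) and memory bound r = d+2 has total cost at least (1 + d·g)·(n₀ − 1). -/

import Mathlib

open scoped Classical

/-- A relation is a DAG edge relation if its transitive closure is irreflexive
(i.e., the directed graph is acyclic). -/
def IsDag {V : Type*} (E : V → V → Prop) : Prop := Irreflexive (Relation.TransGen E)

namespace MPP

variable {V : Type*} [DecidableEq V] {k : ℕ}

/-- A configuration of multiprocessor red-blue pebbling: a set of red pebbles
for each of the `k` processors, and a set of blue pebbles. -/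
structure Conf (V : Type*) (k : ℕ) where
  red : Fin k → Finset V
  blue : Finset V

/-- Moves of multiprocessor red-blue pebbling. `save`/`load` are the parallel I/O
moves (R1-M)/(R2-M), `compute` is (R3-M), and the removals are (R4-M). -/
inductive Move (V : Type*) (k : ℕ) where
  | save (m : ℕ) (f : Fin m → Fin k) (v : Fin m → V)
  | load (m : ℕ) (f : Fin m → Fin k) (v : Fin m → V)
  | compute (m : ℕ) (f : Fin m → Fin k) (v : Fin m → V)
  | removeRed (j : Fin k) (x : V)
  | removeBlue (x : V)

/-- Add, for each `i`, the node `v i` to the red pebbles of processor `f i`. -/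
def addRed (C : Conf V k) {m : ℕ} (f : Fin m → Fin k) (v : Fin m → V) :
    Fin k → Finset V :=
  fun j => C.red j ∪ (Finset.univ.filter (fun i => f i = j)).image v

/-- The effect of a move on a configuration. -/
def apply : Move V k → Conf V k → Conf V k
  | .save _ _ v, C => ⟨C.red, C.blue ∪ Finset.univ.image v⟩
  | .load _ f v, C => ⟨addRed C f v, C.blue⟩
  | .compute _ f v, C => ⟨addRed C f v, C.blue⟩
  | .removeRed j x, C => ⟨Function.update C.red j (C.red j \ {x}), C.blue⟩
  | .removeBlue x, C => ⟨C.red, C.blue \ {x}⟩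

/-- When a move may legally be performed in a given configuration. -/
def Legal (E : V → V → Prop) : Conf V k → Move V k → Prop
  | C, .save m f v => m ≤ k ∧ Function.Injective f ∧ ∀ i, v i ∈ C.red (f i)
  | C, .load m f v => m ≤ k ∧ Function.Injective f ∧ ∀ i, v i ∈ C.blue
  | C, .compute m f v =>
      m ≤ k ∧ Function.Injective f ∧ ∀ i, ∀ u, E u (v i) → u ∈ C.red (f i)
  | _, .removeRed _ _ => True
  | _, .removeBlue _ => True

/-- A configuration respects the fast-memory bound `r` for every processor. -/
def Valid (r : ℕ) (C : Conf V k) : Prop := ∀ j, (C.red j).card ≤ r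

/-- `Run E r C ms C'` : starting from configuration `C`, the list of moves `ms`
may be legally executed (respecting the memory bound `r` throughout) and leads
to configuration `C'`. -/
inductive Run (E : V → V → Prop) (r : ℕ) : Conf V k → List (Move V k) → Conf V k → Prop
  | nil (C : Conf V k) : Run E r C [] C
  | cons {C C'' : Conf V k} {mv : Move V k} {ms : List (Move V k)} :
      Legal E C mv → Valid r (apply mv C) → Run E r (apply mv C) ms C'' →
      Run E r C (mv :: ms) C''

/-- Cost of a single move: `g` for I/O, `1` for compute, `0` for removal. -/
def moveCost (g : ℕ) : Move V k → ℕ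
  | .save .. => g
  | .load .. => g
  | .compute .. => 1
  | .removeRed .. => 0
  | .removeBlue .. => 0

/-- Total cost of a sequence of moves. -/
def cost (g : ℕ) (ms : List (Move V k)) : ℕ := (ms.map (moveCost g)).sum

def isIO : Move V k → Bool
  | .save .. => true
  | .load .. => true
  | _ => false

/-- The number of I/O moves in a sequence of moves. -/
def ioCount (ms : List (Move V k)) : ℕ := (ms.filter isIO).length

def isCompute : Move V k → Bool
  | .compute .. => true
  | _ => false

/-- The number of compute moves in a sequence of moves. -/
def computeCount (ms : List (Move V k)) : ℕ := (ms.filter isCompute).length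

/-- A sink of the DAG: a node with no outgoing edge. -/
def IsSink (E : V → V → Prop) (v : V) : Prop := ∀ u, ¬ E v u

/-- A terminal configuration: every sink carries at least one pebble. -/
def Terminal (E : V → V → Prop) (C : Conf V k) : Prop :=
  ∀ v, IsSink E v → v ∈ C.blue ∨ ∃ j, v ∈ C.red j

/-- The initial (all-empty) configuration. -/
def init (V : Type*) (k : ℕ) : Conf V k := ⟨fun _ => ∅, ∅⟩

/-- `ms` is a pebbling strategy: a legal run from the empty configuration ending
in a terminal configuration. -/
def IsPebbling (E : V → V → Prop) (r : ℕ) (ms : List (Move V k)) : Prop :=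
  ∃ Cf, Run E r (init V k) ms Cf ∧ Terminal E Cf

/-- The optimal (minimum) cost of a pebbling strategy with `k` processors,
memory bound `r` per processor, and I/O cost `g`. -/
noncomputable def optCost (E : V → V → Prop) (k r g : ℕ) : ℕ :=
  sInf {c | ∃ ms : List (Move V k), IsPebbling E r ms ∧ cost g ms = c}

/-- The minimum number of I/O moves among all minimum-cost pebbling strategies. -/
noncomputable def optIO (E : V → V → Prop) (k r g : ℕ) : ℕ :=
  sInf {q | ∃ ms : List (Move V k),
    IsPebbling E r ms ∧ cost g ms = optCost E k r g ∧ ioCount ms = q}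

/-- The maximum in-degree `Δ_in` of the DAG. -/
noncomputable def maxInDeg (E : V → V → Prop) [Fintype V] : ℕ :=
  Finset.univ.sup fun v => (Finset.univ.filter fun u => E u v).card

/-- The set of nodes computed by a move. -/
def computes : Move V k → Set V
  | .compute _ _ v => Set.range v
  | _ => ∅

/-- `x` is computed by the move at position `s` of `ms`. -/
def ComputedAt (ms : List (Move V k)) (s : ℕ) (x : V) : Prop :=
  ∃ mv, ms[s]? = some mv ∧ x ∈ computes mv

/-- The set of nodes computed by some move strictly before position `t`. -/
def computedBefore (ms : List (Move V k)) (t : ℕ) : Set V :=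
  {x | ∃ s < t, ComputedAt ms s x}

/-- `x` is ready at position `t`: it has not yet been computed, but all its
in-neighbors have been. -/
def Ready (E : V → V → Prop) (ms : List (Move V k)) (t : ℕ) (x : V) : Prop :=
  x ∉ computedBefore ms t ∧ ∀ u, E u x → u ∈ computedBefore ms t

/-- The number of nodes that are ready at position `t`. -/
noncomputable def readyCount (E : V → V → Prop) [Fintype V]
    (ms : List (Move V k)) (t : ℕ) : ℕ :=
  (Finset.univ.filter (Ready E ms t)).card

end MPP

/-- Vertices of the zipper gadget `Z(d, n₀, g)`: input-group nodes `u j`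
(`j < d` is group `S₁`, `d ≤ j < 2d` is group `S₂`), main-chain nodes `v i`
(0-based, so `v 0` is the paper's `v₁`), and chain nodes `w j t`
(`t = 0, …, 2g−1`) attached in front of `u j`. -/
inductive ZipV (d n₀ g : ℕ) where
  | u (j : Fin (2 * d))
  | v (i : Fin n₀)
  | w (j : Fin (2 * d)) (t : Fin (2 * g))
  deriving DecidableEq

/-- Edges of the zipper gadget `Z(d, n₀, g)`: the chain `w j 0 → … → w j (2g−1) → u j`
in front of each input node, the main chain `v 0 → v 1 → …`, and an edge from
every node of `S₁` to `v i` for even `i` (the paper's odd `i`, 1-based) and from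
every node of `S₂` to `v i` for odd `i`. -/
def ZipE (d n₀ g : ℕ) : ZipV d n₀ g → ZipV d n₀ g → Prop :=
  fun x y => match x, y with
  | .w j t, .w j' t' => j = j' ∧ (t' : ℕ) = (t : ℕ) + 1
  | .w j t, .u j' => j = j' ∧ (t : ℕ) = 2 * g - 1
  | .u j, .v i => ((j : ℕ) < d ∧ (i : ℕ) % 2 = 0) ∨ (d ≤ (j : ℕ) ∧ (i : ℕ) % 2 = 1)
  | .v i, .v i' => (i' : ℕ) = (i : ℕ) + 1
  | _, _ => False

/-!
Computing a chain node `v h` needs `v (h - 1)` and the `d` inputs of its group red, so with `v h`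
itself all `d + 2` red slots are full, and consecutive chain nodes need the two different groups.
The proof is a potential argument. The credit towards an input `u j` is the work invested in it
that is still visible in red memory: `g` for `u j` itself and `min g (t + 1)` for the path node
`w j t`. The potential charges `1 + d g` per pebbled chain node plus the credit towards the group of
the next chain node. No move raises it by more than its cost: loads add at most `g` of credit,
computations on a path at most `1`, and computing `v h` leaves no red room for credit towards the
next group, so the `1 + d g` gained in the first term is matched by the `d g` of credit lost in the
second. Hence every pebbling costs at least `(1 + d g) n₀`.
-/

namespace MPP

variable {V : Type*} [DecidableEq V] {k : ℕ}

theorem Run.potential_le_add_cost {E : V → V → Prop} {r g : ℕ} (Φ : Conf V k → ℕ)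
    (hstep : ∀ C mv, Legal E C mv → Valid r (apply mv C) →
      Φ (apply mv C) ≤ Φ C + moveCost g mv)
    {C C' : Conf V k} {ms : List (Move V k)} (h : Run E r C ms C') :
    Φ C' ≤ Φ C + cost g ms := by
  induction h with
  | nil => simp [cost]
  | @cons C _ mv ms hL hV _ ih =>
    have := hstep C mv hL hV
    simp only [cost, List.map_cons, List.sum_cons] at ih ⊢
    omega

theorem addRed_zero (C : Conf V 1) {m : ℕ} (f : Fin m → Fin 1) (v : Fin m → V) :
    addRed C f v 0 = C.red 0 ∪ Finset.univ.image v := by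
  simp [addRed, Subsingleton.elim _ (0 : Fin 1)]

theorem image_univ_eq_empty_or_singleton {α : Type*} [DecidableEq α] {m : ℕ} (hm : m ≤ 1)
    (v : Fin m → α) : Finset.univ.image v = ∅ ∨ ∃ i, Finset.univ.image v = {v i} := by
  interval_cases m
  · simp
  · exact Or.inr ⟨0, by simp [Finset.univ_unique]⟩

end MPP

namespace ZipV

variable {d n₀ g : ℕ}

def input : ZipV d n₀ g → Option (Fin (2 * d))
  | u j => some j
  | w j _ => some j
  | v _ => none

def weight : ZipV d n₀ g → ℕ
  | u _ => g
  | w _ t => min g (t + 1)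
  | v _ => 0

/-- Position on the main chain counted from `1`, so that `0` is free for the other nodes. -/
def rank : ZipV d n₀ g → ℕ
  | v i => i + 1
  | _ => 0

theorem weight_le (x : ZipV d n₀ g) : x.weight ≤ g := by
  cases x <;> simp [weight]

theorem rank_le (x : ZipV d n₀ g) : x.rank ≤ n₀ := by
  cases x <;> simp [rank, Fin.is_lt]

end ZipV

theorem zipE_u_v_iff {d n₀ g : ℕ} {j : Fin (2 * d)} {i : Fin n₀} :
    ZipE d n₀ g (.u j) (.v i) ↔ ((j : ℕ) < d ↔ Even (i : ℕ)) := by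
  simp only [ZipE, Nat.even_iff]
  omega

namespace Zipper

open MPP ZipV Finset

variable {d n₀ g : ℕ}

def inputGroup (d i : ℕ) : Finset (Fin (2 * d)) := {j | (j : ℕ) < d ↔ Even i}

theorem card_inputGroup (i : ℕ) : #(inputGroup d i) = d := by
  have hsplit := card_filter_add_card_filter_not (s := univ) fun j : Fin (2 * d) => (j : ℕ) < d
  simp only [Fin.card_filter_val_lt, card_univ, Fintype.card_fin] at hsplit
  by_cases hi : Even i <;>
    simp only [inputGroup, hi, iff_true, iff_false, Fin.card_filter_val_lt] <;> omega

theorem mem_inputGroup {i : ℕ} {j : Fin (2 * d)} :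
    j ∈ inputGroup d i ↔ ((j : ℕ) < d ↔ Even i) := by
  simp [inputGroup]

theorem sum_inputGroup_add_sum_inputGroup_succ (i : ℕ) (f : Fin (2 * d) → ℕ) :
    ∑ j ∈ inputGroup d i, f j + ∑ j ∈ inputGroup d (i + 1), f j = ∑ j, f j := by
  have hsucc :
      inputGroup d (i + 1) = ({j | ¬((j : ℕ) < d ↔ Even i)} : Finset (Fin (2 * d))) := by
    ext j
    simp only [mem_inputGroup, Nat.even_add_one, mem_filter, mem_univ, true_and]
    tauto
  rw [hsucc, inputGroup, sum_filter_add_sum_filter_not]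

def credit (R : Finset (ZipV d n₀ g)) (j : Fin (2 * d)) : ℕ :=
  {x ∈ R | x.input = some j}.sup weight

theorem le_credit {R : Finset (ZipV d n₀ g)} {x : ZipV d n₀ g} {j : Fin (2 * d)} (hx : x ∈ R)
    (hj : x.input = some j) : x.weight ≤ credit R j :=
  le_sup (f := weight) (mem_filter.2 ⟨hx, hj⟩)

theorem credit_le (R : Finset (ZipV d n₀ g)) (j : Fin (2 * d)) : credit R j ≤ g :=
  Finset.sup_le fun x _ => x.weight_le

theorem credit_mono {R R' : Finset (ZipV d n₀ g)} (h : R' ⊆ R) (j : Fin (2 * d)) :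
    credit R' j ≤ credit R j :=
  sup_mono (filter_subset_filter _ h)

theorem credit_insert (x : ZipV d n₀ g) (R : Finset (ZipV d n₀ g)) (j : Fin (2 * d)) :
    credit (insert x R) j = if x.input = some j then max x.weight (credit R j) else credit R j := by
  unfold credit
  rw [filter_insert]
  split_ifs <;> simp [sup_insert]

theorem credit_insert_v (i : Fin n₀) (R : Finset (ZipV d n₀ g)) (j : Fin (2 * d)) :
    credit (insert (v i) R) j = credit R j := by
  simp [credit_insert, input]

theorem exists_mem_of_credit_ne_zero {R : Finset (ZipV d n₀ g)} {j : Fin (2 * d)}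
    (h : credit R j ≠ 0) : ∃ x ∈ R, x.input = some j := by
  obtain ⟨x, hx, -⟩ := not_forall₂.1 (mt (Finset.sup_eq_bot_iff _ _).2 h)
  exact ⟨x, (mem_filter.1 hx).1, (mem_filter.1 hx).2⟩

theorem sum_credit_le (s : Finset (Fin (2 * d))) (R : Finset (ZipV d n₀ g)) :
    ∑ j ∈ s, credit R j ≤ #s * g := by
  simpa using sum_le_sum fun j (_ : j ∈ s) => credit_le R j

theorem sum_credit_eq_of_forall_mem {s : Finset (Fin (2 * d))} {R : Finset (ZipV d n₀ g)}
    (hs : ∀ j ∈ s, u j ∈ R) : ∑ j ∈ s, credit R j = #s * g := by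
  rw [sum_congr rfl fun j hj => le_antisymm (credit_le R j) (le_credit (hs j hj) rfl)]
  simp

theorem sum_credit_insert_le {s : Finset (Fin (2 * d))} {R : Finset (ZipV d n₀ g)}
    {x : ZipV d n₀ g} {B : ℕ} (hB : ∀ j, x.input = some j → x.weight ≤ credit R j + B) :
    ∑ j ∈ s, credit (insert x R) j ≤ ∑ j ∈ s, credit R j + B := by
  cases hx : x.input with
  | none => simp [credit_insert, hx]
  | some j₀ =>
    calc ∑ j ∈ s, credit (insert x R) j
        ≤ ∑ j ∈ s, (credit R j + if j₀ = j then B else 0) := by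
          refine sum_le_sum fun j _ => ?_
          have := hB j₀ hx
          rw [credit_insert, hx]
          split_ifs <;> simp_all
      _ ≤ ∑ j ∈ s, credit R j + B := by
          rw [sum_add_distrib, sum_ite_eq]
          split_ifs <;> omega

theorem credit_eq_zero_of_card_le {R : Finset (ZipV d n₀ g)} {s : Finset (Fin (2 * d))}
    {a b : Fin n₀} (hab : a ≠ b) (ha : v a ∈ R) (hb : v b ∈ R) (hs : ∀ j ∈ s, u j ∈ R)
    (hR : #R ≤ #s + 2) {j : Fin (2 * d)} (hj : j ∉ s) : credit R j = 0 := by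
  by_contra hne
  obtain ⟨x, hxR, hxj⟩ := exists_mem_of_credit_ne_zero hne
  have hsub : insert x (insert (v a) (insert (v b) (s.image u))) ⊆ R := by
    simp only [insert_subset_iff, image_subset_iff]
    exact ⟨hxR, ha, hb, hs⟩
  have hx : x ∉ insert (v a) (insert (v b) (s.image u)) := by
    simp only [mem_insert, mem_image]
    rintro (rfl | rfl | ⟨i, hi, rfl⟩) <;> simp_all [input]
  have hcard := card_le_card hsub
  rw [card_insert_of_notMem hx, card_insert_of_notMem (by simpa using hab),
    card_insert_of_notMem (by simp), card_image_of_injective _ fun _ _ => u.inj] at hcard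
  omega

def height (P : Finset (ZipV d n₀ g)) : ℕ := P.sup rank

theorem rank_le_height {P : Finset (ZipV d n₀ g)} {x : ZipV d n₀ g} (hx : x ∈ P) :
    x.rank ≤ height P :=
  le_sup hx

theorem height_mono {P P' : Finset (ZipV d n₀ g)} (h : P' ⊆ P) : height P' ≤ height P :=
  sup_mono h

theorem height_insert (x : ZipV d n₀ g) (P : Finset (ZipV d n₀ g)) :
    height (insert x P) = max x.rank (height P) :=
  sup_insert

/-- At `h = 0` the credit towards both groups counts: computing `v 0` leaves a red slot free, which
may carry credit into the second group. -/
def potential (R : Finset (ZipV d n₀ g)) (h : ℕ) : ℕ :=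
  if h = 0 then ∑ j, credit R j else (1 + d * g) * h + ∑ j ∈ inputGroup d h, credit R j

theorem mul_height_le_potential (R : Finset (ZipV d n₀ g)) (h : ℕ) :
    (1 + d * g) * h ≤ potential R h := by
  unfold potential
  split_ifs with h0
  · simp [h0]
  · exact Nat.le_add_right _ _

theorem potential_mono {R R' : Finset (ZipV d n₀ g)} {h h' : ℕ} (hR : R' ⊆ R)
    (hh : h' ≤ h) :
    potential R' h' ≤ potential R h := by
  have hsum (s : Finset (Fin (2 * d))) : ∑ j ∈ s, credit R' j ≤ ∑ j ∈ s, credit R j :=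
    sum_le_sum fun j _ => credit_mono hR j
  unfold potential
  split_ifs with h0' h0 h0
  · exact hsum univ
  · have hsplit := sum_inputGroup_add_sum_inputGroup_succ h (credit R)
    have hnext := sum_credit_le (inputGroup d (h + 1)) R
    have hone : (1 + d * g) * 1 ≤ (1 + d * g) * h := Nat.mul_le_mul_left _ (by omega)
    rw [card_inputGroup] at hnext
    have := hsum univ
    omega
  · omega
  · rcases hh.lt_or_eq with hlt | rfl
    · have hcur := sum_credit_le (inputGroup d h') R'
      have hstep : (1 + d * g) * (h' + 1) ≤ (1 + d * g) * h := Nat.mul_le_mul_left _ hlt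
      rw [card_inputGroup] at hcur
      rw [Nat.mul_succ] at hstep
      omega
    · exact Nat.add_le_add_left (hsum _) _

theorem potential_insert_le {R : Finset (ZipV d n₀ g)} {x : ZipV d n₀ g} {B : ℕ} (h : ℕ)
    (hB : ∀ j, x.input = some j → x.weight ≤ credit R j + B) :
    potential (insert x R) h ≤ potential R h + B := by
  unfold potential
  split_ifs
  · exact sum_credit_insert_le hB
  · have := sum_credit_insert_le (s := inputGroup d h) hB
    omega

theorem weight_le_credit_add_one {R : Finset (ZipV d n₀ g)} {x : ZipV d n₀ g} {j : Fin (2 * d)}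
    (hj : x.input = some j) (hin : ∀ y, ZipE d n₀ g y x → y ∈ R) :
    x.weight ≤ credit R j + 1 := by
  cases x with
  | v i => cases hj
  | u j' =>
    cases hj
    rcases Nat.eq_zero_or_pos g with hg | hg
    · simp [weight, hg]
    · have hlast := le_credit (hin (w j ⟨2 * g - 1, by omega⟩) ⟨rfl, rfl⟩) rfl
      simp only [weight] at hlast ⊢
      omega
  | w j' t =>
    cases hj
    rcases Nat.eq_zero_or_pos (t : ℕ) with ht | ht
    · simp [weight, ht]
    · have hprev := le_credit (hin (w j ⟨t - 1, by omega⟩) ⟨rfl, by simp; omega⟩) rfl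
      simp only [weight] at hprev ⊢
      omega

theorem potential_insert_v {R : Finset (ZipV d n₀ g)} (i : Fin n₀)
    (hin : ∀ y, ZipE d n₀ g y (v i) → y ∈ R) (hR : #(insert (v i) R) ≤ d + 2) :
    potential (insert (v i) R) (i + 1) ≤ potential R i + 1 := by
  have hS (j) (hj : j ∈ inputGroup d i) : u j ∈ R :=
    hin _ (zipE_u_v_iff.2 (mem_inputGroup.1 hj))
  have hcur : ∑ j ∈ inputGroup d i, credit R j = d * g := by
    rw [sum_credit_eq_of_forall_mem hS, card_inputGroup]
  rcases Nat.eq_zero_or_pos (i : ℕ) with hi | hi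
  · have hsplit := sum_inputGroup_add_sum_inputGroup_succ (d := d) 0 (credit R)
    rw [zero_add] at hsplit
    rw [hi] at hcur
    simp only [potential, hi, credit_insert_v, if_true, zero_add, one_ne_zero, if_false]
    omega
  · have hprev : v ⟨i - 1, by omega⟩ ∈ R := hin _ (by simp only [ZipE]; omega)
    have hnext : ∑ j ∈ inputGroup d (i + 1), credit (insert (v i) R) j = 0 :=
      sum_eq_zero fun j hj => credit_eq_zero_of_card_le (s := inputGroup d i)
        (Fin.ne_of_val_ne (by simp only; omega)) (mem_insert_of_mem hprev) (mem_insert_self _ _)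
        (fun j hj => mem_insert_of_mem (hS j hj)) (by rwa [card_inputGroup])
        (by rw [mem_inputGroup] at hj ⊢; rw [Nat.even_add_one] at hj; tauto)
    simp only [potential, hnext, Nat.add_one_ne_zero, hi.ne', if_false, hcur, Nat.mul_succ]
    omega

theorem potential_compute_le {R P : Finset (ZipV d n₀ g)} {x : ZipV d n₀ g} (hRP : R ⊆ P)
    (hin : ∀ y, ZipE d n₀ g y x → y ∈ R) (hR : #(insert x R) ≤ d + 2) :
    potential (insert x R) (height (insert x P)) ≤ potential R (height P) + 1 := by
  rw [height_insert]
  by_cases hx : x.rank ≤ height P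
  · rw [max_eq_right hx]
    exact potential_insert_le _ fun j hj => weight_le_credit_add_one hj hin
  cases x with
  | u j => simp [rank] at hx
  | w j t => simp [rank] at hx
  | v i =>
    have hle : (i : ℕ) ≤ height P := by
      rcases Nat.eq_zero_or_pos (i : ℕ) with hi | hi
      · omega
      · have := rank_le_height (hRP (hin (v ⟨i - 1, by omega⟩) (by simp [ZipE]; omega)))
        simp only [rank] at this
        omega
    simp only [rank] at hx ⊢
    rw [max_eq_left (by omega), show height P = i by omega]
    exact potential_insert_v i hin hR

def confPotential (C : Conf (ZipV d n₀ g) 1) : ℕ :=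
  potential (C.red 0) (height (C.red 0 ∪ C.blue))

theorem confPotential_init : confPotential (init (ZipV d n₀ g) 1) = 0 := by
  simp [confPotential, init, potential, height, credit]

theorem confPotential_apply_le {C : Conf (ZipV d n₀ g) 1} {mv : Move (ZipV d n₀ g) 1}
    (hL : Legal (ZipE d n₀ g) C mv) (hV : Valid (d + 2) (apply mv C)) :
    confPotential (apply mv C) ≤ confPotential C + moveCost g mv := by
  cases mv with
  | save m f vs =>
    obtain ⟨-, -, hvs⟩ := hL
    have hsaved : univ.image vs ⊆ C.red 0 := by
      simpa [image_subset_iff, Subsingleton.elim _ (0 : Fin 1)] using hvs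
    have hpeb : C.red 0 ∪ (C.blue ∪ univ.image vs) = C.red 0 ∪ C.blue := by
      rw [← union_assoc, union_right_comm, union_eq_left.2 hsaved]
    simp [confPotential, apply, hpeb]
  | load m f vs =>
    obtain ⟨hm, -, hvs⟩ := hL
    rcases image_univ_eq_empty_or_singleton hm vs with h | ⟨i, h⟩
    · simp [confPotential, apply, addRed_zero, h]
    · simp only [confPotential, apply, addRed_zero, h, union_singleton, insert_union,
        insert_eq_of_mem (mem_union_right _ (hvs i)), moveCost]
      exact potential_insert_le _ fun j _ => (weight_le _).trans (Nat.le_add_left _ _)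
  | compute m f vs =>
    obtain ⟨hm, -, hvs⟩ := hL
    rcases image_univ_eq_empty_or_singleton hm vs with h | ⟨i, h⟩
    · simp [confPotential, apply, addRed_zero, h]
    · have hR := hV 0
      simp only [apply, addRed_zero, h, union_singleton] at hR
      simp only [confPotential, apply, addRed_zero, h, union_singleton, insert_union, moveCost]
      exact potential_compute_le subset_union_left
        (fun y hy => by simpa [Subsingleton.elim (f i) 0] using hvs i y hy) hR
  | removeRed j x =>
    obtain rfl := Subsingleton.elim j 0
    simp only [confPotential, apply, Function.update_self, moveCost, add_zero]
    exact potential_mono sdiff_subset (height_mono (union_subset_union sdiff_subset subset_rfl))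
  | removeBlue x =>
    exact potential_mono subset_rfl (height_mono (union_subset_union subset_rfl sdiff_subset))

theorem le_height_of_terminal {C : Conf (ZipV d n₀ g) 1} (hC : Terminal (ZipE d n₀ g) C) :
    n₀ ≤ height (C.red 0 ∪ C.blue) := by
  rcases Nat.eq_zero_or_pos n₀ with hn | hn
  · omega
  have hsink : IsSink (ZipE d n₀ g) (v ⟨n₀ - 1, by omega⟩) := by
    rintro (_ | i | _) hE <;> simp only [ZipE] at hE
    omega
  have hmem : v ⟨n₀ - 1, by omega⟩ ∈ C.red 0 ∪ C.blue := by
    rcases hC _ hsink with hb | ⟨j, hr⟩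
    · exact mem_union_right _ hb
    · exact mem_union_left _ (Subsingleton.elim j 0 ▸ hr)
  have := rank_le_height hmem
  simp only [rank] at this
  omega

theorem mul_le_cost_of_isPebbling {ms : List (Move (ZipV d n₀ g) 1)}
    (hms : IsPebbling (ZipE d n₀ g) (d + 2) ms) : (1 + d * g) * n₀ ≤ cost g ms := by
  obtain ⟨C, hrun, hC⟩ := hms
  calc (1 + d * g) * n₀ ≤ (1 + d * g) * height (C.red 0 ∪ C.blue) :=
        Nat.mul_le_mul_left _ (le_height_of_terminal hC)
    _ ≤ confPotential C := mul_height_le_potential _ _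
    _ ≤ confPotential (init _ 1) + cost g ms :=
        hrun.potential_le_add_cost _ fun _ _ => confPotential_apply_le
    _ = cost g ms := by rw [confPotential_init, zero_add]

end Zipper

theorem stmt15_general (d n₀ g : ℕ) :
    ∀ ms : List (MPP.Move (ZipV d n₀ g) 1),
      MPP.IsPebbling (ZipE d n₀ g) (d + 2) ms →
      (1 + d * g) * (n₀ - 1) ≤ MPP.cost g ms :=
  fun _ hms =>
    (Nat.mul_le_mul_left _ (Nat.sub_le n₀ 1)).trans (Zipper.mul_le_cost_of_isPebbling hms)

/-- For all `d, n₀, g ∈ ℤ⁺` with `n₀ ≥ 2`, every MPP pebbling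
strategy of the zipper gadget `Z(d,n₀,g)` with a single processor (`k = 1`) and
memory bound `r = d+2` has total cost at least `(1 + d·g)·(n₀ − 1)`. -/
theorem stmt15 (d n₀ g : ℕ) (hd : 0 < d) (hn : 2 ≤ n₀) (hg : 0 < g) :
    ∀ ms : List (MPP.Move (ZipV d n₀ g) 1),
      MPP.IsPebbling (ZipE d n₀ g) (d + 2) ms →
      (1 + d * g) * (n₀ - 1) ≤ MPP.cost g ms :=
  stmt15_general d n₀ g
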